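/- Let G be a finite connected simple graph with n vertices and m edges, all of whose vertices have degree at least 2 (so m ≥ n). Then for every complex number λ, det(λ·I_{2m} − U⁺) = (λ² − 1)^{m−n} · det((λ² − 1)·I_n − λ·A(G) + D). (The Proposition of Section 5: characteristic polynomial of the positive support of the transition matrix.) -/
import Mathlib


open Matrix SimpleGraph Polynomial

/-- The transition matrix `U` (over `ℝ`) of the discrete-time quantum walk on `G`, indexed
by darts: `U e f = 2 / deg (t f)` if `t f = o e` and `f ≠ e⁻¹`, `U e f = 2 / deg (t f) - 1`
if `f = e⁻¹`, and `0` otherwise. -/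
noncomputable def quantumUR {V : Type*} [Fintype V] (G : SimpleGraph V)
    [DecidableRel G.Adj] [DecidableEq V] : Matrix G.Dart G.Dart ℝ :=
  fun e f =>
    if f.toProd.2 = e.toProd.1 ∧ f ≠ e.symm then (2 : ℝ) / (G.degree f.toProd.2 : ℝ)
    else if f = e.symm then (2 : ℝ) / (G.degree f.toProd.2 : ℝ) - 1
    else 0

/-- The positive support of a real matrix, viewed as a matrix over a semiring `R`:
entry `1` where the original entry is positive, `0` otherwise. -/
noncomputable def posSupport {α : Type*} (R : Type*) [Zero R] [One R]
    (F : Matrix α α ℝ) : Matrix α α R :=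
  fun i j => if 0 < F i j then 1 else 0


section Aux
open Finset
variable {V : Type*} [Fintype V] [DecidableEq V] (G : SimpleGraph V) [DecidableRel G.Adj]

noncomputable def Mo : Matrix G.Dart V ℂ := fun e v => if e.toProd.1 = v then 1 else 0
noncomputable def Nt : Matrix G.Dart V ℂ := fun e v => if e.toProd.2 = v then 1 else 0
noncomputable def Jm : Matrix G.Dart G.Dart ℂ := fun e f => if f = e.symm then 1 else 0
noncomputable def Cm : Matrix G.Dart G.edgeSet ℂ := fun e ε => if e.edge = (ε : Sym2 V) then 1 else 0

lemma symm_eq_symm_iff (e f : G.Dart) : e.symm = f.symm ↔ e = f :=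
  (Dart.symm_involutive.injective).eq_iff

lemma JJ : Jm G * Jm G = 1 := by
  ext e f
  simp only [Jm, Matrix.mul_apply, Matrix.one_apply]
  rw [Finset.sum_eq_single e.symm]
  · simp [eq_comm]
  · intro b _ hb
    rw [if_neg hb, zero_mul]
  · simp

lemma CCt : Cm G * (Cm G)ᵀ = 1 + Jm G := by
  ext e f
  simp only [Cm, Jm, Matrix.mul_apply, Matrix.one_apply, transpose_apply, Pi.add_apply,
    Matrix.add_apply]
  have : (∑ x : G.edgeSet, (if e.edge = (x:Sym2 V) then (1:ℂ) else 0) *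
      (if f.edge = (x:Sym2 V) then 1 else 0)) = if e.edge = f.edge then (1:ℂ) else 0 := by
    rw [Finset.sum_eq_single (⟨f.edge, f.edge_mem⟩ : G.edgeSet)]
    · simp
    · intro b _ hb
      have : ¬ (f.edge = (b : Sym2 V)) := fun h => hb (Subtype.ext h.symm)
      simp [this]
    · simp
  rw [this]
  by_cases h : e = f
  · subst h
    rw [if_pos rfl, if_pos rfl, if_neg (fun hf => (Dart.symm_ne e) hf.symm), add_zero]
  · by_cases h2 : f = e.symm
    · have he : e.edge = f.edge := by rw [h2]; simp
      rw [if_pos he, if_neg h, if_pos h2, zero_add]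
    · have he : ¬ e.edge = f.edge := by
        rw [dart_edge_eq_iff]
        push_neg
        exact ⟨h, fun hx => h2 (by rw [hx, Dart.symm_symm])⟩
      rw [if_neg he, if_neg h, if_neg h2, add_zero]

lemma CtC : (Cm G)ᵀ * Cm G = (2:ℂ) • 1 := by
  ext a b
  simp only [Cm, Matrix.mul_apply, Matrix.one_apply, transpose_apply, Matrix.smul_apply,
    smul_ite, smul_zero]
  rcases eq_or_ne a b with rfl | hab
  · simp only [if_pos rfl]
    have : ∀ x : G.Dart, (if x.edge = (a:Sym2 V) then (1:ℂ) else 0) *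
        (if x.edge = (a:Sym2 V) then (1:ℂ) else 0) = if x.edge = (a:Sym2 V) then (1:ℂ) else 0 := by
      intro x; by_cases h : x.edge = (a:Sym2 V) <;> simp [h]
    rw [Finset.sum_congr rfl fun x _ => this x, Finset.sum_boole]
    have := G.dart_edge_fiber_card (a:Sym2 V) a.2
    rw [show ({d : G.Dart | d.edge = (a:Sym2 V)} : Finset _) = Finset.univ.filter
      (fun x => x.edge = (a:Sym2 V)) from rfl] at this
    rw [this]
    norm_num
  · rw [if_neg hab, Finset.sum_eq_zero]
    intro x _
    by_cases h : x.edge = (a:Sym2 V)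
    · have : ¬ (x.edge = (b:Sym2 V)) := by rw [h]; exact fun hh => hab (Subtype.ext hh)
      simp [this]
    · simp [h]

lemma NtM : (Nt G)ᵀ * Mo G = (G.adjMatrix ℂ) := by
  ext u v
  simp only [Nt, Mo, Matrix.mul_apply, transpose_apply, adjMatrix_apply]
  by_cases h : G.Adj v u
  · rw [Finset.sum_eq_single (⟨(v,u), h⟩ : G.Dart)]
    · simp [if_pos (G.adj_symm h)]
    · intro b _ hb
      rcases eq_or_ne b.toProd.2 u with h2 | h2
      · have : ¬ (b.toProd.1 = v) := fun h1 => hb (Dart.ext _ _ (Prod.ext h1 h2))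
        simp [this]
      · simp [h2]
    · simp
  · rw [Finset.sum_eq_zero, if_neg (fun hh => h (G.adj_symm hh))]
    intro x _
    rcases eq_or_ne x.toProd.2 u with h2 | h2
    · have : ¬ (x.toProd.1 = v) := fun h1 => h (h1 ▸ h2 ▸ x.adj)
      simp [this]
    · simp [h2]

lemma snd_fiber_card (u : V) : (Finset.univ.filter fun x : G.Dart => x.toProd.2 = u).card
    = G.degree u := by
  rw [← G.dart_fst_fiber_card_eq_degree u]
  apply Finset.card_bij (fun d _ => d.symm)
  · intro a ha; simp at ha ⊢; simpa using ha
  · intro a _ b _ h; simpa [symm_eq_symm_iff] using h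
  · intro b hb; refine ⟨b.symm, ?_, by simp⟩; simp at hb ⊢; simpa using hb

lemma NtJM : (Nt G)ᵀ * (Jm G * Mo G) = Matrix.diagonal (fun v => (G.degree v : ℂ)) := by
  have hJM : ∀ (e : G.Dart) (v : V), (Jm G * Mo G) e v = if e.toProd.2 = v then (1:ℂ) else 0 := by
    intro e v
    simp only [Jm, Mo, Matrix.mul_apply]
    rw [Finset.sum_eq_single e.symm]
    · simp
    · intro b _ hb; rw [if_neg (fun hh => hb hh), zero_mul]
    · simp
  ext u v
  simp only [Matrix.mul_apply, transpose_apply, Nt, hJM, Matrix.diagonal_apply]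
  rcases eq_or_ne u v with rfl | huv
  · simp only [if_pos rfl]
    have : ∀ x : G.Dart, (if x.toProd.2 = u then (1:ℂ) else 0) *
        (if x.toProd.2 = u then (1:ℂ) else 0) = if x.toProd.2 = u then (1:ℂ) else 0 := by
      intro x; by_cases h : x.toProd.2 = u <;> simp [h]
    rw [Finset.sum_congr rfl fun x _ => this x, Finset.sum_boole, snd_fiber_card]
    simp
  · rw [if_neg huv, Finset.sum_eq_zero]
    intro x _
    rcases eq_or_ne x.toProd.2 u with h2 | h2
    · have : ¬ (x.toProd.2 = v) := by rw [h2]; exact huv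
      simp [this]
    · simp [h2]

lemma Wdet (lam : ℂ) (h2 : lam^2 - 1 ≠ 0) :
    (lam • (1 : Matrix G.Dart G.Dart ℂ) + Jm G).det = (lam^2-1) ^ G.edgeFinset.card := by
  have hl1 : lam - 1 ≠ 0 := by
    intro h
    apply h2
    have h1 : lam = 1 := by linear_combination h
    rw [h1]; ring
  have hW : lam • (1 : Matrix G.Dart G.Dart ℂ) + Jm G
      = (lam - 1) • (1 + ((lam-1)⁻¹ • Cm G) * (Cm G)ᵀ) := by
    rw [Matrix.smul_mul, CCt, smul_add, smul_smul, mul_inv_cancel₀ hl1, one_smul, sub_smul,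
      one_smul]
    abel
  rw [hW, Matrix.det_smul, Matrix.det_one_add_mul_comm]
  have h3 : (Cm G)ᵀ * ((lam-1)⁻¹ • Cm G) = ((lam-1)⁻¹ * 2) • 1 := by
    rw [Matrix.mul_smul, CtC, smul_smul]
  have h4 : (1 : Matrix G.edgeSet G.edgeSet ℂ) + ((lam-1)⁻¹*2) • 1
      = (1 + (lam-1)⁻¹*2) • 1 := by
    rw [add_smul, one_smul]
  rw [h3, h4, Matrix.det_smul, Matrix.det_one, mul_one]
  have hcd : Fintype.card G.Dart = 2 * G.edgeFinset.card := G.dart_card_eq_twice_card_edges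
  have hce : Fintype.card G.edgeSet = G.edgeFinset.card := by
    rw [SimpleGraph.edgeFinset, Set.toFinset_card]
  have h5 : (1 + (lam-1)⁻¹*2) = (lam+1) * (lam-1)⁻¹ := by
    field_simp
    ring
  rw [hcd, hce, h5, pow_mul, ← mul_pow]
  congr 1
  field_simp
  ring

lemma posSupport_eq (hdeg : ∀ v : V, 2 ≤ G.degree v) :
    posSupport ℂ (quantumUR G) = Mo G * (Nt G)ᵀ - Jm G := by
  ext e f
  have hR : (Mo G * (Nt G)ᵀ) e f = if f.toProd.2 = e.toProd.1 then (1:ℂ) else 0 := by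
    simp only [Mo, Nt, Matrix.mul_apply, transpose_apply]
    rw [Finset.sum_eq_single e.toProd.1]
    · simp [eq_comm]
    · intro b _ hb
      simp [Ne.symm hb]
    · simp
  have hdpos : (0:ℝ) < (G.degree f.toProd.2 : ℝ) := by
    have := hdeg f.toProd.2; positivity
  simp only [posSupport, quantumUR, Matrix.sub_apply, hR, Jm]
  by_cases hs : f = e.symm
  · subst hs
    have hle : ¬ ((0:ℝ) < 2 / (G.degree e.symm.toProd.2 : ℝ) - 1) := by
      rw [not_lt, sub_nonpos, div_le_one hdpos]
      exact_mod_cast hdeg e.symm.toProd.2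
    have ht : e.symm.toProd.2 = e.toProd.1 := rfl
    have hd1 : (0:ℝ) < (G.degree e.toProd.1 : ℝ) := by
      have := hdeg e.toProd.1; positivity
    have h21 : (2:ℝ) / (G.degree e.toProd.1 : ℝ) ≤ 1 := by
      rw [div_le_one hd1]; exact_mod_cast hdeg e.toProd.1
    simp [hle, ht, h21]
  · by_cases h1 : f.toProd.2 = e.toProd.1
    · have hp : (0:ℝ) < 2 / (G.degree f.toProd.2 : ℝ) := by positivity
      simp [h1, hs, hp]
    · simp [h1, hs]

lemma card_le (hdeg : ∀ v : V, 2 ≤ G.degree v) : Fintype.card V ≤ G.edgeFinset.card := by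
  have h := G.sum_degrees_eq_twice_card_edges
  have : 2 * Fintype.card V ≤ ∑ v, G.degree v := by
    calc 2 * Fintype.card V = ∑ _v : V, 2 := by
          simp [Finset.sum_const, mul_comm]
      _ ≤ ∑ v, G.degree v := Finset.sum_le_sum fun v _ => hdeg v
  omega

lemma key (hdeg : ∀ v : V, 2 ≤ G.degree v) (lam : ℂ) (h2 : lam^2 - 1 ≠ 0) :
    (lam • (1 : Matrix G.Dart G.Dart ℂ) - posSupport ℂ (quantumUR G)).det =
      (lam ^ 2 - 1) ^ (G.edgeFinset.card - Fintype.card V) *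
        ((lam ^ 2 - 1) • (1 : Matrix V V ℂ) - lam • G.adjMatrix ℂ +
          (Matrix.diagonal fun v => (G.degree v : ℂ))).det := by
  set W : Matrix G.Dart G.Dart ℂ := lam • 1 + Jm G with hWdef
  set Wi : Matrix G.Dart G.Dart ℂ := (lam^2-1)⁻¹ • (lam • 1 - Jm G) with hWidef
  have hprod : W * (lam • (1 : Matrix G.Dart G.Dart ℂ) - Jm G) = (lam^2 - 1) • 1 := by
    simp only [hWdef, Matrix.mul_sub, Matrix.add_mul, Matrix.smul_mul, Matrix.mul_smul,
      Matrix.one_mul, Matrix.mul_one, JJ, smul_smul]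
    rw [sub_smul, pow_two, one_smul]
    simp only [smul_add, smul_smul]
    abel
  have hWWi : W * Wi = 1 := by
    rw [hWidef, Matrix.mul_smul, hprod, smul_smul, inv_mul_cancel₀ h2, one_smul]
  have hfact : lam • (1 : Matrix G.Dart G.Dart ℂ) - posSupport ℂ (quantumUR G) =
      W * (1 - Wi * (Mo G * (Nt G)ᵀ)) := by
    rw [Matrix.mul_sub, Matrix.mul_one, ← Matrix.mul_assoc, hWWi, Matrix.one_mul,
      posSupport_eq G hdeg, hWdef]
    abel
  have hmid : (Nt G)ᵀ * (Wi * Mo G) = (lam^2-1)⁻¹ • (lam • G.adjMatrix ℂ -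
      Matrix.diagonal (fun v => (G.degree v : ℂ))) := by
    rw [hWidef, Matrix.smul_mul, Matrix.mul_smul, Matrix.sub_mul, Matrix.smul_mul,
      Matrix.one_mul, Matrix.mul_sub, Matrix.mul_smul, NtM, ← Matrix.mul_assoc]
    rw [Matrix.mul_assoc, NtJM]
  rw [hfact, Matrix.det_mul, Wdet G lam h2, ← Matrix.mul_assoc Wi,
    Matrix.det_one_sub_mul_comm, hmid]
  set Dg : Matrix V V ℂ := Matrix.diagonal (fun v => (G.degree v : ℂ)) with hDg
  set X : Matrix V V ℂ := lam • G.adjMatrix ℂ - Dg with hX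
  have hsc : ((lam^2-1) • ((1 : Matrix V V ℂ) - (lam^2-1)⁻¹ • X)) =
      (lam^2-1) • (1 : Matrix V V ℂ) - lam • G.adjMatrix ℂ + Dg := by
    rw [smul_sub, smul_smul, mul_inv_cancel₀ h2, one_smul, hX]
    abel
  have hdetsc : ((lam^2-1)^(Fintype.card V)) * ((1 : Matrix V V ℂ) - (lam^2-1)⁻¹ • X).det =
      ((lam^2-1) • (1 : Matrix V V ℂ) - lam • G.adjMatrix ℂ + Dg).det := by
    rw [← hsc, Matrix.det_smul]
  rw [← hdetsc, ← mul_assoc, ← pow_add, Nat.sub_add_cancel (card_le G hdeg)]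

end Aux

open Finset in
theorem stmt13 {V : Type*} [Fintype V] [DecidableEq V] (G : SimpleGraph V)
    [DecidableRel G.Adj] (hconn : G.Connected) (hdeg : ∀ v : V, 2 ≤ G.degree v)
    (lam : ℂ) :
    (lam • (1 : Matrix G.Dart G.Dart ℂ) - posSupport ℂ (quantumUR G)).det =
      (lam ^ 2 - 1) ^ (G.edgeFinset.card - Fintype.card V) *
        ((lam ^ 2 - 1) • (1 : Matrix V V ℂ) - lam • G.adjMatrix ℂ +
          (Matrix.diagonal fun v => (G.degree v : ℂ))).det := by
  classical
  set p : ℂ[X] := ((Polynomial.X : ℂ[X]) • (1 : Matrix G.Dart G.Dart ℂ[X]) -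
    posSupport ℂ[X] (quantumUR G)).det with hpdef
  set q : ℂ[X] := ((X:ℂ[X])^2 - 1)^(G.edgeFinset.card - Fintype.card V) *
    (((X:ℂ[X])^2-1) • (1 : Matrix V V ℂ[X]) - (X:ℂ[X]) • G.adjMatrix ℂ[X] +
      Matrix.diagonal fun v => (G.degree v : ℂ[X])).det with hqdef
  have hp : ∀ z : ℂ, p.eval z =
      (z • (1 : Matrix G.Dart G.Dart ℂ) - posSupport ℂ (quantumUR G)).det := by
    intro z
    have hmap := RingHom.map_det (Polynomial.evalRingHom z)
      ((Polynomial.X : ℂ[X]) • (1 : Matrix G.Dart G.Dart ℂ[X]) - posSupport ℂ[X] (quantumUR G))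
    rw [hpdef, show ∀ r : ℂ[X], r.eval z = (evalRingHom z) r from fun _ => rfl, hmap]
    congr 1
    ext i j
    simp [RingHom.mapMatrix_apply, Matrix.map_apply, posSupport, Matrix.sub_apply,
      Matrix.smul_apply, Matrix.one_apply, apply_ite (fun r : ℂ[X] => (evalRingHom z) r)]
    split_ifs <;> simp
  have hq : ∀ z : ℂ, q.eval z =
      (z ^ 2 - 1) ^ (G.edgeFinset.card - Fintype.card V) *
        ((z ^ 2 - 1) • (1 : Matrix V V ℂ) - z • G.adjMatrix ℂ +
          (Matrix.diagonal fun v => (G.degree v : ℂ))).det := by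
    intro z
    have hmap := RingHom.map_det (Polynomial.evalRingHom z)
      (((X:ℂ[X])^2-1) • (1 : Matrix V V ℂ[X]) - (X:ℂ[X]) • G.adjMatrix ℂ[X] +
        Matrix.diagonal fun v => (G.degree v : ℂ[X]))
    rw [hqdef, show ∀ r : ℂ[X], r.eval z = (evalRingHom z) r from fun _ => rfl, _root_.map_mul,
      hmap]
    congr 1
    · simp
    · congr 1
      ext i j
      simp only [RingHom.mapMatrix_apply, Matrix.map_apply, Matrix.sub_apply, Matrix.add_apply,
        Matrix.smul_apply, Matrix.one_apply, Matrix.diagonal_apply, adjMatrix_apply,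
        smul_eq_mul, map_sub, _root_.map_mul, map_pow, _root_.map_one, coe_evalRingHom, eval_X, eval_natCast]
      split_ifs <;> simp
  have hpq : p = q := by
    apply Polynomial.eq_of_infinite_eval_eq
    have hfin : ({z : ℂ | z^2 - 1 = 0}).Finite := by
      apply Set.Finite.subset ((Set.finite_singleton (-1:ℂ)).insert 1)
      intro z hz
      simp only [Set.mem_setOf_eq] at hz
      have hz2 : (z-1)*(z+1) = 0 := by linear_combination hz
      rcases mul_eq_zero.1 hz2 with h | h
      · left; linear_combination h
      · right; simp only [Set.mem_singleton_iff]; linear_combination h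
    have hinf : ({z : ℂ | ¬ (z^2 - 1 = 0)}).Infinite := by
      have := hfin.infinite_compl
      simpa [Set.compl_setOf] using this
    apply hinf.mono
    intro z hz
    simp only [Set.mem_setOf_eq] at hz ⊢
    rw [hp, hq]
    exact key G hdeg z hz
  rw [← hp lam, hpq, hq lam]
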